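/- arXiv:2210.09227 — 2 statements merged into one kernel-verified Lean document; each statement's English description precedes it below -/
import Mathlib

section
/- For all positive integers d, r with r ≥ 2, setting ℓ = ⌈d/r⌉, and for every N ≥ 2: if ℓ + 1 ≤ d, then there exists an r-colouring of the edges of □^d K_N containing no monochromatic copy of □^(ℓ+1) K_2. (Namely, the value ℓ = ⌈d/r⌉ in the previous corollary is tight: one cannot always guarantee a monochromatic copy of □^(ℓ+1) K_n for any n ≥ 2.) -/
/-- `x` and `y` are adjacent in direction `i` in `□^d K_N`: they differ in
coordinate `i` and agree in all other coordinates. -/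
def DirAdj {d N : ℕ} (i : Fin d) (x y : Fin d → Fin N) : Prop :=
  x i ≠ y i ∧ ∀ j : Fin d, j ≠ i → x j = y j

/-- `x` lies in the box `A₁ × ⋯ × A_d`. -/
def InBox {d N : ℕ} (A : Fin d → Finset (Fin N)) (x : Fin d → Fin N) : Prop :=
  ∀ i : Fin d, x i ∈ A i

/-- The box `A₁ × ⋯ × A_d` is (the vertex set of) a copy of `□^m K_n` inside
`□^d K_N`: exactly `m` of the sets `A i` have size `n` and the remaining ones
are singletons. -/
def SubBoxCopy {d N : ℕ} (m n : ℕ) (A : Fin d → Finset (Fin N)) : Prop :=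
  ∃ I : Finset (Fin d), I.card = m ∧ (∀ i ∈ I, (A i).card = n) ∧
    ∀ i ∉ I, (A i).card = 1

/-- The copy on the box `A₁ × ⋯ × A_d` is monochromatic: all its edges (in all
directions) receive one and the same colour. -/
def MonoBox {d N r : ℕ} (c : Sym2 (Fin d → Fin N) → Fin r)
    (A : Fin d → Finset (Fin N)) : Prop :=
  ∃ col : Fin r, ∀ x y : Fin d → Fin N,
    InBox A x → InBox A y → (∃ i : Fin d, DirAdj i x y) → c s(x, y) = col

lemma aux_le (d r : ℕ) (hd : 0 < d) (hr : 0 < r) : d ≤ r * ((d + r - 1) / r) := by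
  obtain ⟨e, rfl⟩ : ∃ e, d = e + 1 := ⟨d - 1, by omega⟩
  have h := Nat.lt_div_mul_add (a := e + 1 + r - 1) hr
  have h2 : e + 1 + r - 1 = e + r := by omega
  rw [h2] at h ⊢
  rw [mul_comm]
  nlinarith

/-- Tightness of `ℓ = ⌈d/r⌉`: if `ℓ + 1 ≤ d` then for every `N ≥ 2` there is an
`r`-colouring of the edges of `□^d K_N` with no monochromatic copy of
`□^(ℓ+1) K_2`. -/
theorem ceil_div_tight (d r N : ℕ) (hd : 0 < d) (hr : 2 ≤ r) (hN : 2 ≤ N)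
    (hℓ : (d + r - 1) / r + 1 ≤ d) :
    ∃ c : Sym2 (Fin d → Fin N) → Fin r,
      ∀ A : Fin d → Finset (Fin N),
        SubBoxCopy ((d + r - 1) / r + 1) 2 A → ¬ MonoBox c A := by
  set ℓ := (d + r - 1) / r with hℓdef
  have hℓpos : 0 < ℓ := Nat.one_le_div_iff (by omega) |>.mpr (by omega)
  have hdℓ : d ≤ r * ℓ := aux_le d r hd (by omega)
  -- colour class of a direction
  set cls : Fin d → Fin r := fun i =>
    ⟨(i : ℕ) / ℓ, (Nat.div_lt_iff_lt_mul hℓpos).mpr (lt_of_lt_of_le i.isLt hdℓ)⟩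
    with hcls
  -- set of coordinates where x and y differ
  set D : (Fin d → Fin N) → (Fin d → Fin N) → Finset (Fin d) :=
    fun x y => Finset.univ.filter (fun i => x i ≠ y i) with hD
  have hDsymm : ∀ x y, D x y = D y x := by
    intro x y
    simp only [hD]
    apply Finset.filter_congr
    intro i _
    simp [ne_comm]
  -- the colouring
  set g : (Fin d → Fin N) → (Fin d → Fin N) → Fin r := fun x y =>
    if h : (D x y).Nonempty then cls ((D x y).min' h) else ⟨0, by omega⟩ with hg
  have hgsymm : ∀ x y, g x y = g y x := by
    intro x y
    simp only [hg, hDsymm x y]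
  refine ⟨Sym2.lift ⟨g, hgsymm⟩, ?_⟩
  intro A hA hmono
  obtain ⟨I, hIcard, hI2, hI1⟩ := hA
  obtain ⟨col, hcol⟩ := hmono
  -- base point
  have hne : ∀ j, (A j).Nonempty := by
    intro j
    rw [← Finset.card_pos]
    by_cases hj : j ∈ I
    · rw [hI2 j hj]; omega
    · rw [hI1 j hj]; omega
  choose a ha using hne
  -- each i in I has colour class col
  have hkey : ∀ i ∈ I, cls i = col := by
    intro i hi
    obtain ⟨b, hb, hba⟩ := Finset.exists_mem_ne (by rw [hI2 i hi]; omega) (a i)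
    set y := Function.update a i b with hy
    have hadj : DirAdj i a y := by
      constructor
      · rw [hy, Function.update_self]; exact fun h => hba h.symm
      · intro j hj; rw [hy, Function.update_of_ne hj]
    have hiny : InBox A y := by
      intro j
      by_cases hj : j = i
      · subst hj; rw [hy, Function.update_self]; exact hb
      · rw [hy, Function.update_of_ne hj]; exact ha j
    have hedge := hcol a y (fun j => ha j) hiny ⟨i, hadj⟩
    -- compute the colour
    have hDsingle : D a y = {i} := by
      ext j
      simp only [hD, Finset.mem_filter, Finset.mem_univ, true_and, Finset.mem_singleton]
      constructor
      · intro hne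
        by_contra hj
        exact hne (hadj.2 j hj)
      · intro hj
        subst hj
        exact hadj.1
    rw [Sym2.lift_mk] at hedge
    simp only [hg, hDsingle] at hedge
    rw [dif_pos ⟨i, Finset.mem_singleton_self i⟩] at hedge
    rw [show ({i} : Finset (Fin d)).min' ⟨i, Finset.mem_singleton_self i⟩ = i from
      Finset.min'_singleton i] at hedge
    exact hedge
  -- pigeonhole contradiction
  have hsub : I.image (fun i : Fin d => (i : ℕ)) ⊆ Finset.Ico ((col : ℕ) * ℓ) ((col : ℕ) * ℓ + ℓ) := by
    intro n hn
    obtain ⟨i, hi, rfl⟩ := Finset.mem_image.mp hn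
    have h1 : (i : ℕ) / ℓ = (col : ℕ) := by
      have := hkey i hi
      rw [hcls] at this
      exact congrArg Fin.val this
    rw [Finset.mem_Ico]
    constructor
    · rw [← h1]; exact Nat.div_mul_le_self _ _
    · rw [← h1]
      exact Nat.lt_div_mul_add hℓpos
  have hcard : (I.image (fun i : Fin d => (i : ℕ))).card = ℓ + 1 := by
    rw [Finset.card_image_of_injective _ Fin.val_injective, hIcard]
  have := Finset.card_le_card hsub
  rw [hcard, Nat.card_Ico] at this
  omega
end

section
/- Let d ≥ 1 and k be positive integers, let 0 < ε < 1/2, and set g = 2·15^(d−1). Suppose N ≥ ε^(−g·k^(d−1)) · k^(g·k^(d−1)) and suppose f : [N]^d → ℝ is an injective d-consistent array. Then for every set S ⊆ [N]^d with |S| ≥ ε·N^d there exist sets A_1, …, A_d ⊆ [N] with |A_i| = k for each i and A_1 × ⋯ × A_d ⊆ S such that the restriction of f to A_1 × ⋯ × A_d is a monotone subarray of size [k]^d. -/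
/-- The restriction of the array `f` to the box `A₁ × ⋯ × A_d` is monotone:
for each direction `i`, either `f` is strictly increasing in the `i`-th
coordinate for every fixed choice of the other coordinates, or strictly
decreasing in it for every fixed choice of the other coordinates. -/
def MonotoneArrayOn {d N : ℕ} (f : (Fin d → Fin N) → ℝ)
    (A : Fin d → Finset (Fin N)) : Prop :=
  ∀ i : Fin d,
    (∀ x y : Fin d → Fin N, InBox A x → InBox A y →
        (∀ j : Fin d, j ≠ i → x j = y j) → x i < y i → f x < f y) ∨
    (∀ x y : Fin d → Fin N, InBox A x → InBox A y →
        (∀ j : Fin d, j ≠ i → x j = y j) → x i < y i → f y < f x)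

/-- The restriction of the injective array `f` to the box `A₁ × ⋯ × A_d` is
`d`-consistent.  This is the unfolded form of the recursive definition
(1-consistent = monotone; `d`-consistent = all hyperplane slices carry the same
`(d-1)`-consistent order pattern): (a) the lines in the first direction are
uniformly increasing or uniformly decreasing, and (b) for every `i`, the
comparison `f x < f y` for points `x, y` of the box agreeing in all coordinates
`> i` depends only on their coordinates `≤ i`. -/
def ConsistentArrayOn {d N : ℕ} (f : (Fin d → Fin N) → ℝ)
    (A : Fin d → Finset (Fin N)) : Prop :=
  (∀ i : Fin d, i.val = 0 →
    ((∀ x y : Fin d → Fin N, InBox A x → InBox A y →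
        (∀ j : Fin d, j ≠ i → x j = y j) → x i < y i → f x < f y) ∨
     (∀ x y : Fin d → Fin N, InBox A x → InBox A y →
        (∀ j : Fin d, j ≠ i → x j = y j) → x i < y i → f y < f x))) ∧
  (∀ i : Fin d, ∀ x y x' y' : Fin d → Fin N,
    InBox A x → InBox A y → InBox A x' → InBox A y' →
    (∀ j : Fin d, i < j → x j = y j) → (∀ j : Fin d, i < j → x' j = y' j) →
    (∀ j : Fin d, j ≤ i → x j = x' j) → (∀ j : Fin d, j ≤ i → y j = y' j) →
    (f x < f y ↔ f x' < f y'))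

/-
Induction on the dimension, splitting a point of `[N]^(d+1)` as `(u, a)` with `u ∈ [N]^d` and `a`
its last coordinate. Since `S` is dense, a positive proportion of the columns `u` have a dense
fibre `R u = {a | (u, a) ∈ S}`. By a supersaturated Erdős–Szekeres theorem such a fibre contains
at least `C(N, k) (ε/4)^k / k^(2k)` sets of size `k` on which `a ↦ f (u, a)` is monotone, so by
double counting a single `k`-set `M`, monotone in a single direction, serves a set `T` of columns of
density `ε' = (ε/4)^(k+1) / k^(2k)`. Induction applied to a slice `u ↦ f (u, a₀)` and to `T` gives
a box `A ⊆ T`, and `A × M` is the required box: by consistency every slice orders `[N]^d` in the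
same way.
Passing from `ε` to `ε'` multiplies the exponent in the bound on `N` by `15 k`.
-/

open Finset

section ErdosSzekeres

variable {α β : Type*} [LinearOrder α] [LinearOrder β] {v : α → β} {P : Finset α} {a b : α}
  {k : ℕ}

variable (v P) in
open scoped Classical in
noncomputable def increasingChainsEndingAt (a : α) : Finset (Finset α) :=
  {M ∈ P.powerset | a ∈ M ∧ (∀ b ∈ M, b ≤ a) ∧ StrictMonoOn v M}

variable (v P) in
noncomputable def maxIncreasingLength (a : α) : ℕ :=
  (increasingChainsEndingAt v P a).sup card

lemma mem_increasingChainsEndingAt {M : Finset α} :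
    M ∈ increasingChainsEndingAt v P a ↔
      M ⊆ P ∧ a ∈ M ∧ (∀ b ∈ M, b ≤ a) ∧ StrictMonoOn v M := by
  simp [increasingChainsEndingAt]

lemma singleton_mem_increasingChainsEndingAt (ha : a ∈ P) :
    {a} ∈ increasingChainsEndingAt v P a := by
  simp [mem_increasingChainsEndingAt, ha]

lemma exists_card_eq_maxIncreasingLength (ha : a ∈ P) :
    ∃ M ∈ increasingChainsEndingAt v P a, #M = maxIncreasingLength v P a :=
  (exists_mem_eq_sup _ ⟨_, singleton_mem_increasingChainsEndingAt ha⟩ card).imp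
    fun _ hM => ⟨hM.1, hM.2.symm⟩

lemma one_le_maxIncreasingLength (ha : a ∈ P) : 1 ≤ maxIncreasingLength v P a :=
  le_sup (f := card) (singleton_mem_increasingChainsEndingAt ha)

lemma maxIncreasingLength_lt (ha : a ∈ P) (hb : b ∈ P) (hab : a < b) (hv : v a < v b) :
    maxIncreasingLength v P a < maxIncreasingLength v P b := by
  obtain ⟨M, hM, hcard⟩ := exists_card_eq_maxIncreasingLength (v := v) ha
  obtain ⟨hMP, haM, hle, hmono⟩ := mem_increasingChainsEndingAt.1 hM
  have hle_b : ∀ c ∈ M, c ≤ b := fun c hc => (hle c hc).trans hab.le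
  have hins : insert b M ∈ increasingChainsEndingAt v P b := by
    refine mem_increasingChainsEndingAt.2 ⟨insert_subset hb hMP, mem_insert_self _ _, ?_, ?_⟩
    · simpa using hle_b
    · rw [coe_insert, strictMonoOn_insert_iff_of_forall_le hle_b]
      exact ⟨fun c hc _ => (hmono.monotoneOn hc haM (hle c hc)).trans_lt hv, hmono⟩
  calc maxIncreasingLength v P a < #(insert b M) := by
        rw [card_insert_of_notMem fun h => (hle b h).not_gt hab, hcard]; omega
    _ ≤ maxIncreasingLength v P b := le_sup (f := card) hins

lemma exists_strictMonoOn_of_le_maxIncreasingLength (ha : a ∈ P)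
    (hk : k ≤ maxIncreasingLength v P a) : ∃ M ⊆ P, #M = k ∧ StrictMonoOn v M := by
  obtain ⟨M, hM, hcard⟩ := exists_card_eq_maxIncreasingLength (v := v) ha
  obtain ⟨hMP, -, -, hmono⟩ := mem_increasingChainsEndingAt.1 hM
  obtain ⟨M', hM'M, hM'card⟩ := exists_subset_card_eq (hcard ▸ hk)
  exact ⟨M', hM'M.trans hMP, hM'card, hmono.mono (by simpa using hM'M)⟩

theorem exists_strictMonoOn_or_strictAntiOn (hv : Set.InjOn v P) (hP : (k - 1) ^ 2 < #P) :
    ∃ M ⊆ P, #M = k ∧ (StrictMonoOn v M ∨ StrictAntiOn v M) := by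
  by_contra! h
  set L := maxIncreasingLength v P
  set D := maxIncreasingLength (OrderDual.toDual ∘ v) P
  have hL : ∀ a ∈ P, L a ≤ k - 1 := fun a ha => by
    by_contra! hlt
    obtain ⟨M, hMP, hM, hmono⟩ :=
      exists_strictMonoOn_of_le_maxIncreasingLength (v := v) ha (show k ≤ L a by omega)
    exact (h M hMP hM).1 hmono
  have hD : ∀ a ∈ P, D a ≤ k - 1 := fun a ha => by
    by_contra! hlt
    obtain ⟨M, hMP, hM, hmono⟩ := exists_strictMonoOn_of_le_maxIncreasingLength
      (v := OrderDual.toDual ∘ v) ha (show k ≤ D a by omega)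
    exact (h M hMP hM).2 (strictMonoOn_toDual_comp_iff.1 hmono)
  have hlabel : ∀ a ∈ P, ∀ b ∈ P, a < b → (L a, D a) ≠ (L b, D b) := by
    intro a ha b hb hab heq
    rcases lt_or_gt_of_ne (hv.ne ha hb hab.ne) with hv' | hv'
    · exact (maxIncreasingLength_lt ha hb hab hv').ne (congrArg Prod.fst heq)
    · exact (maxIncreasingLength_lt (v := OrderDual.toDual ∘ v) ha hb hab hv').ne
        (congrArg Prod.snd heq)
  have hinj : Set.InjOn (fun a => (L a, D a)) P := by
    intro a ha b hb heq
    by_contra hne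
    rcases lt_or_gt_of_ne hne with hab | hab
    · exact hlabel a ha b hb hab heq
    · exact hlabel b hb a ha hab heq.symm
  have hmaps : Set.MapsTo (fun a => (L a, D a)) P (Icc 1 (k - 1) ×ˢ Icc 1 (k - 1) : Finset _) :=
    fun a ha => by
      simp only [coe_product, coe_Icc, Set.mem_prod, Set.mem_Icc]
      exact ⟨⟨one_le_maxIncreasingLength ha, hL a ha⟩, one_le_maxIncreasingLength ha, hD a ha⟩
  have := card_le_card_of_injOn _ hmaps hinj
  simp only [card_product, Nat.card_Icc, add_tsub_cancel_right] at this
  nlinarith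

end ErdosSzekeres

section Supersaturation

variable {α : Type*} {R : Finset α} {k K : ℕ}

theorem choose_le_card_mul_choose_of_forall_exists_subset [DecidableEq α]
    {𝓕 : Finset (Finset α)} (hkK : k ≤ K) (hK : K ≤ #R) (h𝓕 : 𝓕 ⊆ R.powersetCard k)
    (hcover : ∀ P ∈ R.powersetCard K, ∃ M ∈ 𝓕, M ⊆ P) :
    (#R).choose k ≤ #𝓕 * K.choose k := by
  have hcount : #(R.powersetCard K) * 1 ≤ #𝓕 * (#R - k).choose (K - k) := by
    refine card_mul_le_card_mul (fun P M => M ⊆ P) (fun P hP => ?_) fun M hM => ?_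
    · obtain ⟨M, hM, hMP⟩ := hcover P hP
      exact card_pos.2 ⟨M, (mem_bipartiteAbove _).2 ⟨hM, hMP⟩⟩
    · obtain ⟨hMR, hMk⟩ := mem_powersetCard.1 (h𝓕 hM)
      rw [← hMk]
      exact (card_filter_powersetCard_subset M R K hMR (hMk ▸ hkK)).le
  rw [card_powersetCard, mul_one] at hcount
  refine Nat.le_of_mul_le_mul_right ?_ (Nat.choose_pos (Nat.sub_le_sub_right hK k))
  calc (#R).choose k * (#R - k).choose (K - k) = (#R).choose K * K.choose k :=
        (Nat.choose_mul hkK).symm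
    _ ≤ #𝓕 * K.choose k * (#R - k).choose (K - k) := by
        rw [mul_right_comm]; exact Nat.mul_le_mul_right _ hcount

lemma le_sub_one_sq_add_one (k : ℕ) : k ≤ (k - 1) ^ 2 + 1 := by
  rcases k with _ | k
  · omega
  · simp only [add_tsub_cancel_right]; nlinarith

variable [LinearOrder α] {β : Type*} [LinearOrder β] {v : α → β}

open scoped Classical in
noncomputable def monotoneSubsets (v : α → β) (R : Finset α) (k : ℕ) : Finset (Finset α) :=
  {M ∈ R.powersetCard k | StrictMonoOn v (M : Set α) ∨ StrictAntiOn v (M : Set α)}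

lemma mem_monotoneSubsets {M : Finset α} :
    M ∈ monotoneSubsets v R k ↔ (M ⊆ R ∧ #M = k) ∧ (StrictMonoOn v M ∨ StrictAntiOn v M) := by
  simp [monotoneSubsets]

theorem choose_le_card_monotoneSubsets_mul_choose (hv : Set.InjOn v R)
    (hR : (k - 1) ^ 2 + 1 ≤ #R) :
    (#R).choose k ≤ #(monotoneSubsets v R k) * ((k - 1) ^ 2 + 1).choose k := by
  classical
  refine choose_le_card_mul_choose_of_forall_exists_subset (le_sub_one_sq_add_one k) hR
    (fun M hM => mem_powersetCard.2 (mem_monotoneSubsets.1 hM).1) fun P hP => ?_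
  obtain ⟨hPR, hPcard⟩ := mem_powersetCard.1 hP
  obtain ⟨M, hMP, hMcard, hM⟩ :=
    exists_strictMonoOn_or_strictAntiOn (hv.mono (coe_subset.2 hPR)) (k := k) (by omega)
  exact ⟨M, mem_monotoneSubsets.2 ⟨⟨hMP.trans hPR, hMcard⟩, hM⟩, hMP⟩

end Supersaturation

section Counting

variable {ι κ : Type*}

theorem half_mul_card_le_card_filter {s : Finset ι} {x : ι → ℝ} {ε c : ℝ} (hε : 0 ≤ ε)
    (hc : 0 < c) (hx : ∀ i ∈ s, x i ≤ c) (hsum : ε * #s * c ≤ ∑ i ∈ s, x i) :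
    ε / 2 * #s ≤ #{i ∈ s | ε / 2 * c ≤ x i} := by
  classical
  set good := {i ∈ s | ε / 2 * c ≤ x i}
  have hgood : ∑ i ∈ good, x i ≤ #good * c := by
    simpa using sum_le_card_nsmul good x c fun i hi => hx i (mem_filter.1 hi).1
  have hbad : ∑ i ∈ s with ¬ε / 2 * c ≤ x i, x i ≤ #s * (ε / 2 * c) := by
    refine (sum_le_card_nsmul _ x _ fun i hi => (not_le.1 (mem_filter.1 hi).2).le).trans ?_
    rw [nsmul_eq_mul]
    exact mul_le_mul_of_nonneg_right (by exact_mod_cast card_filter_le _ _) (by positivity)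
  rw [← sum_filter_add_sum_filter_not s (fun i => ε / 2 * c ≤ x i)] at hsum
  nlinarith

theorem exists_mem_sum_card_le_card_mul_card_filter_mem [DecidableEq κ] {s : Finset ι}
    {t : Finset κ} {F : ι → Finset κ} (hF : ∀ i ∈ s, F i ⊆ t) (ht : t.Nonempty) :
    ∃ M ∈ t, ∑ i ∈ s, #(F i) ≤ #t * #{i ∈ s | M ∈ F i} := by
  have hsum : ∑ i ∈ s, #(F i) = ∑ M ∈ t, #{i ∈ s | M ∈ F i} :=
    calc ∑ i ∈ s, #(F i) = ∑ i ∈ s, #(t.bipartiteAbove (fun i M => M ∈ F i) i) :=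
          sum_congr rfl fun i hi => by
            rw [bipartiteAbove, filter_mem_eq_inter, inter_eq_right.2 (hF i hi)]
      _ = ∑ M ∈ t, #{i ∈ s | M ∈ F i} := sum_card_bipartiteAbove_eq_sum_card_bipartiteBelow _
  exact exists_le_of_sum_le ht (by rw [sum_const, smul_eq_mul, ← mul_sum, hsum])

theorem exists_subset_card_le_two_mul_and_forall_or {s : Finset ι} {p q : ι → Prop}
    (h : ∀ i ∈ s, p i ∨ q i) :
    ∃ T ⊆ s, #s ≤ 2 * #T ∧ ((∀ i ∈ T, p i) ∨ (∀ i ∈ T, q i)) := by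
  classical
  have hsplit : #{i ∈ s | p i} + #{i ∈ s | ¬p i} = #s := card_filter_add_card_filter_not p
  rcases le_total #{i ∈ s | ¬p i} #{i ∈ s | p i} with hle | hle
  · exact ⟨{i ∈ s | p i}, filter_subset _ _, by omega, Or.inl fun i hi => (mem_filter.1 hi).2⟩
  · refine ⟨{i ∈ s | ¬p i}, filter_subset _ _, by omega, Or.inr fun i hi => ?_⟩
    obtain ⟨his, hpi⟩ := mem_filter.1 hi
    exact (h i his).resolve_left hpi

end Counting

noncomputable def columnDensity (ε : ℝ) (k : ℕ) : ℝ := (ε / 4) ^ (k + 1) / k ^ (2 * k)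

section Columns

variable {α : Type*} [LinearOrder α] {k N : ℕ} {ε : ℝ}

open Nat in
theorem choose_mul_pow_le_card_monotoneSubsets_mul_pow {R : Finset α} {v : α → ℝ}
    (hv : Set.InjOn v R) (hk : 0 < k) (hN : 4 * k ^ 2 ≤ ε * N) (hR : ε / 2 * N ≤ #R) :
    (N.choose k : ℝ) * (ε / 4) ^ k ≤ #(monotoneSubsets v R k) * (k : ℝ) ^ (2 * k) := by
  have hk1 : (1 : ℝ) ≤ k := by exact_mod_cast hk
  have hε : 0 < ε := pos_of_mul_pos_left (by nlinarith) (Nat.cast_nonneg N)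
  have hKk : (k - 1) ^ 2 + 1 ≤ k ^ 2 := by
    obtain ⟨j, rfl⟩ := Nat.exists_eq_add_of_le' hk
    simp only [add_tsub_cancel_right]; nlinarith
  have hKR : (k - 1) ^ 2 + 1 ≤ #R := by
    have : (((k - 1) ^ 2 + 1 : ℕ) : ℝ) ≤ #R :=
      calc (((k - 1) ^ 2 + 1 : ℕ) : ℝ) ≤ (k : ℝ) ^ 2 := by exact_mod_cast hKk
        _ ≤ #R := by nlinarith
    exact_mod_cast this
  have hchoose : ((k - 1) ^ 2 + 1).choose k ≤ k ^ (2 * k) :=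
    calc ((k - 1) ^ 2 + 1).choose k ≤ ((k - 1) ^ 2 + 1) ^ k := Nat.choose_le_pow _ _
      _ ≤ (k ^ 2) ^ k := Nat.pow_le_pow_left hKk k
      _ = k ^ (2 * k) := by rw [← pow_mul]
  have hfree : ε / 4 * N ≤ ((#R + 1 - k : ℕ) : ℝ) := by
    rw [Nat.cast_sub (by linarith [le_sub_one_sq_add_one k])]; push_cast; nlinarith
  calc (N.choose k : ℝ) * (ε / 4) ^ k ≤ N ^ k / k ! * (ε / 4) ^ k :=
        mul_le_mul_of_nonneg_right (Nat.choose_le_pow_div k N) (by positivity)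
    _ = (ε / 4 * N) ^ k / k ! := by ring
    _ ≤ ((#R + 1 - k : ℕ) : ℝ) ^ k / k ! := by gcongr
    _ ≤ (#R).choose k := Nat.pow_le_choose k _
    _ ≤ _ := by exact_mod_cast
        (choose_le_card_monotoneSubsets_mul_choose hv hKR).trans (Nat.mul_le_mul_left _ hchoose)

variable {U : Type*} [Fintype U] [Fintype α] {v : U → α → ℝ} {R : U → Finset α}

theorem exists_dense_columns_mem_monotoneSubsets (hv : ∀ u, Set.InjOn (v u) (R u))
    (hk : 0 < k) (hε1 : ε ≤ 1) (hN : 4 * k ^ 2 ≤ ε * Fintype.card α)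
    (hR : ε * Fintype.card U * Fintype.card α ≤ ∑ u, (#(R u) : ℝ)) :
    ∃ M : Finset α, #M = k ∧ ∃ T : Finset U,
      2 * columnDensity ε k * Fintype.card U ≤ #T ∧ ∀ u ∈ T, M ∈ monotoneSubsets (v u) (R u) k := by
  classical
  set N := Fintype.card α
  have hk1 : (1 : ℝ) ≤ k := by exact_mod_cast hk
  have hεN : 0 < ε * N := by nlinarith
  have hε : 0 < ε := pos_of_mul_pos_left hεN (Nat.cast_nonneg N)
  have hkN : k ≤ N := by
    have : (k : ℝ) ≤ N := by nlinarith
    exact_mod_cast this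
  set good : Finset U := {u | ε / 2 * N ≤ #(R u)}
  have hgood : ε / 2 * Fintype.card U ≤ #good := by
    simpa using half_mul_card_le_card_filter (s := univ) (x := fun u => (#(R u) : ℝ)) hε.le
      (pos_of_mul_pos_right hεN hε.le) (fun u _ => by exact_mod_cast card_le_univ (R u))
      (by simpa using hR)
  obtain ⟨M, hM, hMcount⟩ := exists_mem_sum_card_le_card_mul_card_filter_mem (s := good)
    (t := univ.powersetCard k) (F := fun u => monotoneSubsets (v u) (R u) k)
    (fun u _ M hM => mem_powersetCard.2 ⟨subset_univ _, (mem_monotoneSubsets.1 hM).1.2⟩)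
    (powersetCard_nonempty.2 (by simpa using hkN))
  set T := {u ∈ good | M ∈ monotoneSubsets (v u) (R u) k}
  refine ⟨M, (mem_powersetCard.1 hM).2, T, ?_, fun u hu => (mem_filter.1 hu).2⟩
  have hcount : (N.choose k : ℝ) * (#good * (ε / 4) ^ k) ≤ N.choose k * (#T * k ^ (2 * k)) :=
    calc _ = ∑ u ∈ good, (N.choose k : ℝ) * (ε / 4) ^ k := by rw [sum_const, nsmul_eq_mul]; ring
      _ ≤ ∑ u ∈ good, (#(monotoneSubsets (v u) (R u) k) : ℝ) * k ^ (2 * k) :=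
          sum_le_sum fun u hu =>
            choose_mul_pow_le_card_monotoneSubsets_mul_pow (hv u) hk hN (mem_filter.1 hu).2
      _ = ((∑ u ∈ good, #(monotoneSubsets (v u) (R u) k) : ℕ) : ℝ) * k ^ (2 * k) := by
          push_cast; rw [sum_mul]
      _ ≤ ((#(univ.powersetCard k) * #T : ℕ) : ℝ) * k ^ (2 * k) := by gcongr
      _ = _ := by rw [card_powersetCard, card_univ]; push_cast; ring
  have hT := le_of_mul_le_mul_left hcount (by exact_mod_cast Nat.choose_pos hkN)
  rw [columnDensity, mul_div_assoc', div_mul_eq_mul_div, div_le_iff₀ (by positivity), pow_succ]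
  nlinarith [pow_pos (by linarith : (0 : ℝ) < ε / 4) k]

theorem exists_dense_columns_with_common_monotone_subset (hv : ∀ u, Set.InjOn (v u) (R u))
    (hk : 0 < k) (hε1 : ε ≤ 1) (hN : 4 * k ^ 2 ≤ ε * Fintype.card α)
    (hR : ε * Fintype.card U * Fintype.card α ≤ ∑ u, (#(R u) : ℝ)) :
    ∃ M : Finset α, #M = k ∧ ∃ T : Finset U,
      columnDensity ε k * Fintype.card U ≤ #T ∧ (∀ u ∈ T, M ⊆ R u) ∧
      ((∀ u ∈ T, StrictMonoOn (v u) M) ∨ (∀ u ∈ T, StrictAntiOn (v u) M)) := by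
  obtain ⟨M, hMk, T', hT', hT'M⟩ := exists_dense_columns_mem_monotoneSubsets hv hk hε1 hN hR
  obtain ⟨T, hTT', hT, hdir⟩ := exists_subset_card_le_two_mul_and_forall_or
    (p := fun u => StrictMonoOn (v u) M) (q := fun u => StrictAntiOn (v u) M)
    fun u hu => (mem_monotoneSubsets.1 (hT'M u hu)).2
  refine ⟨M, hMk, T, ?_, fun u hu => (mem_monotoneSubsets.1 (hT'M u (hTT' hu))).1.1, hdir⟩
  have : (#T' : ℝ) ≤ 2 * #T := by exact_mod_cast hT
  linarith

end Columns

section Numerics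

variable {ε : ℝ}

lemma four_mul_sq_div_le_div_pow_three {k : ℝ} (hk : 1 ≤ k) (hε0 : 0 < ε) (hε : ε < 1 / 2) :
    4 * k ^ 2 / ε ≤ (k / ε) ^ 3 := by
  have hε2 : 4 * ε ^ 2 ≤ k := by nlinarith
  rw [div_pow, div_le_div_iff₀ hε0 (by positivity)]
  nlinarith [mul_nonneg (mul_nonneg (sq_nonneg k) hε0.le) (sub_nonneg.2 hε2)]

lemma four_mul_sq_le_mul_of_div_pow_le {k N : ℝ} {n : ℕ} (hk : 1 ≤ k) (hε0 : 0 < ε)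
    (hε : ε < 1 / 2) (hn : 3 ≤ n) (hN : (k / ε) ^ n ≤ N) : 4 * k ^ 2 ≤ ε * N := by
  have hkε : 1 ≤ k / ε := by rw [le_div_iff₀ hε0]; linarith
  calc 4 * k ^ 2 = ε * (4 * k ^ 2 / ε) := by field_simp
    _ ≤ ε * (k / ε) ^ n := by
      gcongr
      exact (four_mul_sq_div_le_div_pow_three hk hε0 hε).trans (pow_le_pow_right₀ hkε hn)
    _ ≤ ε * N := by gcongr

variable {k : ℕ}

lemma columnDensity_pos (hk : 0 < k) (hε0 : 0 < ε) : 0 < columnDensity ε k := by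
  unfold columnDensity; positivity

lemma columnDensity_lt_half (hk : 0 < k) (hε0 : 0 < ε) (hε : ε < 1 / 2) :
    columnDensity ε k < 1 / 2 :=
  calc columnDensity ε k ≤ (ε / 4) ^ (k + 1) :=
        div_le_self (by positivity) (one_le_pow₀ (by exact_mod_cast hk))
    _ ≤ ε / 4 := pow_le_of_le_one (by positivity) (by linarith) (by omega)
    _ < 1 / 2 := by linarith

lemma div_columnDensity_le (hk : 0 < k) (hε0 : 0 < ε) (hε : ε < 1 / 2) :
    k / columnDensity ε k ≤ (k / ε) ^ (15 * k) := by
  have hk1 : (1 : ℝ) ≤ k := by exact_mod_cast hk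
  have hkε : 1 ≤ (k : ℝ) / ε := by rw [le_div_iff₀ hε0]; linarith
  calc k / columnDensity ε k = k ^ (2 * k + 1) * (4 / ε) ^ (k + 1) := by
        rw [columnDensity, div_div_eq_mul_div, div_eq_mul_inv, ← inv_pow, inv_div, ← pow_succ']
    _ ≤ k ^ (2 * k + 2) * (4 / ε) ^ (k + 1) :=
        mul_le_mul_of_nonneg_right (pow_le_pow_right₀ hk1 (by omega)) (by positivity)
    _ = (4 * k ^ 2 / ε) ^ (k + 1) := by ring
    _ ≤ ((k / ε) ^ 3) ^ (k + 1) := by gcongr; exact four_mul_sq_div_le_div_pow_three hk1 hε0 hε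
    _ = (k / ε) ^ (3 * (k + 1)) := by rw [← pow_mul]
    _ ≤ (k / ε) ^ (15 * k) := pow_le_pow_right₀ hkε (by omega)

end Numerics

section Arrays

variable {d N : ℕ}

lemma inBox_univ (x : Fin d → Fin N) : InBox (fun _ => univ) x := fun _ => mem_univ _

lemma inBox_snoc_iff {A : Fin d → Finset (Fin N)} {M : Finset (Fin N)} {u : Fin d → Fin N}
    {a : Fin N} :
    InBox (Fin.snoc A M) (Fin.snoc u a : Fin (d + 1) → Fin N) ↔ InBox A u ∧ a ∈ M := by
  simp [InBox, Fin.forall_fin_succ']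

variable {u w : Fin d → Fin N} {a b : Fin N} {i : Fin d}

lemma snoc_eq_snoc_off_last_iff :
    (∀ j, j ≠ Fin.last d → (Fin.snoc u a : Fin (d + 1) → Fin N) j =
        (Fin.snoc w b : Fin (d + 1) → Fin N) j) ↔ u = w := by
  simp [Fin.forall_fin_succ', funext_iff, Fin.castSucc_ne_last]

lemma snoc_eq_snoc_off_castSucc_iff :
    (∀ j, j ≠ i.castSucc → (Fin.snoc u a : Fin (d + 1) → Fin N) j =
        (Fin.snoc w b : Fin (d + 1) → Fin N) j) ↔ (∀ j, j ≠ i → u j = w j) ∧ a = b := by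
  simp [Fin.forall_fin_succ', (Fin.castSucc_ne_last i).symm]

lemma snoc_eq_snoc_above_castSucc_iff :
    (∀ j, i.castSucc < j → (Fin.snoc u a : Fin (d + 1) → Fin N) j =
        (Fin.snoc w b : Fin (d + 1) → Fin N) j) ↔ (∀ j, i < j → u j = w j) ∧ a = b := by
  simp [Fin.forall_fin_succ', Fin.castSucc_lt_last]

lemma snoc_eq_snoc_upto_castSucc_iff :
    (∀ j, j ≤ i.castSucc → (Fin.snoc u a : Fin (d + 1) → Fin N) j =
        (Fin.snoc w b : Fin (d + 1) → Fin N) j) ↔ ∀ j, j ≤ i → u j = w j := by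
  simp [Fin.forall_fin_succ']

variable {A : Fin d → Finset (Fin N)} {M : Finset (Fin N)} {x y : Fin (d + 1) → Fin N}

lemma exists_snoc_of_line_last (hx : InBox (Fin.snoc A M) x) (hy : InBox (Fin.snoc A M) y)
    (hxy : ∀ j, j ≠ Fin.last d → x j = y j) (hlt : x (Fin.last d) < y (Fin.last d)) :
    ∃ u a b, InBox A u ∧ a ∈ M ∧ b ∈ M ∧ a < b ∧ x = Fin.snoc u a ∧ y = Fin.snoc u b := by
  induction x using Fin.snocCases with | _ u a => ?_
  induction y using Fin.snocCases with | _ w b => ?_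
  obtain rfl := snoc_eq_snoc_off_last_iff.1 hxy
  rw [inBox_snoc_iff] at hx hy
  exact ⟨u, a, b, hx.1, hx.2, hy.2, by simpa using hlt, rfl, rfl⟩

lemma exists_snoc_of_line_castSucc (hx : InBox (Fin.snoc A M) x) (hy : InBox (Fin.snoc A M) y)
    (hxy : ∀ j, j ≠ i.castSucc → x j = y j) (hlt : x i.castSucc < y i.castSucc) :
    ∃ u w a, InBox A u ∧ InBox A w ∧ (∀ j, j ≠ i → u j = w j) ∧ u i < w i ∧
      x = Fin.snoc u a ∧ y = Fin.snoc w a := by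
  induction x using Fin.snocCases with | _ u a => ?_
  induction y using Fin.snocCases with | _ w b => ?_
  obtain ⟨huw, rfl⟩ := snoc_eq_snoc_off_castSucc_iff.1 hxy
  rw [inBox_snoc_iff] at hx hy
  exact ⟨u, w, a, hx.1, hy.1, huw, by simpa using hlt, rfl, rfl⟩

lemma MonotoneArrayOn.mono {f : (Fin d → Fin N) → ℝ} {B : Fin d → Finset (Fin N)}
    (h : MonotoneArrayOn f B) (hAB : ∀ i, A i ⊆ B i) : MonotoneArrayOn f A := fun i =>
  (h i).imp (fun h x y hx hy => h x y (fun j => hAB j (hx j)) fun j => hAB j (hy j))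
    fun h x y hx hy => h x y (fun j => hAB j (hx j)) fun j => hAB j (hy j)

lemma MonotoneArrayOn.snoc {f : (Fin (d + 1) → Fin N) → ℝ} (a₀ : Fin N)
    (hslice : ∀ u w a,
      f (Fin.snoc u a) < f (Fin.snoc w a) ↔ f (Fin.snoc u a₀) < f (Fin.snoc w a₀))
    (hA : MonotoneArrayOn (fun u => f (Fin.snoc u a₀)) A)
    (hM : (∀ u, InBox A u → StrictMonoOn (fun a => f (Fin.snoc u a)) M) ∨
      (∀ u, InBox A u → StrictAntiOn (fun a => f (Fin.snoc u a)) M)) :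
    MonotoneArrayOn f (Fin.snoc A M) := by
  intro i
  induction i using Fin.lastCases with
  | last =>
    refine hM.imp (fun h x y hx hy hxy hlt => ?_) fun h x y hx hy hxy hlt => ?_ <;>
      obtain ⟨u, a, b, hu, ha, hb, hab, rfl, rfl⟩ := exists_snoc_of_line_last hx hy hxy hlt
    · exact h u hu ha hb hab
    · exact h u hu ha hb hab
  | cast i =>
    refine (hA i).imp (fun h x y hx hy hxy hlt => ?_) fun h x y hx hy hxy hlt => ?_ <;>
      obtain ⟨u, w, a, hu, hw, huw, hlt', rfl, rfl⟩ := exists_snoc_of_line_castSucc hx hy hxy hlt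
    · exact (hslice u w a).2 (h u w hu hw huw hlt')
    · exact (hslice w u a).2 (h u w hu hw huw hlt')

lemma ConsistentArrayOn.slice {f : (Fin (d + 1) → Fin N) → ℝ}
    (hf : ConsistentArrayOn f fun _ => univ) (a : Fin N) :
    ConsistentArrayOn (fun u => f (Fin.snoc u a)) fun _ => univ := by
  refine ⟨fun i hi => ?_, fun i x y x' y' _ _ _ _ hxy hxy' hxx' hyy' => ?_⟩
  · refine (hf.1 i.castSucc hi).imp (fun h x y _ _ hxy hlt => ?_) fun h x y _ _ hxy hlt => ?_ <;>
      exact h _ _ (inBox_univ _) (inBox_univ _) (snoc_eq_snoc_off_castSucc_iff.2 ⟨hxy, rfl⟩)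
        (by simpa using hlt)
  · exact hf.2 i.castSucc _ _ _ _ (inBox_univ _) (inBox_univ _) (inBox_univ _) (inBox_univ _)
      (snoc_eq_snoc_above_castSucc_iff.2 ⟨hxy, rfl⟩)
      (snoc_eq_snoc_above_castSucc_iff.2 ⟨hxy', rfl⟩)
      (snoc_eq_snoc_upto_castSucc_iff.2 hxx') (snoc_eq_snoc_upto_castSucc_iff.2 hyy')

lemma ConsistentArrayOn.snoc_lt_snoc_iff {f : (Fin (d + 2) → Fin N) → ℝ}
    (hf : ConsistentArrayOn f fun _ => univ) (u w : Fin (d + 1) → Fin N) (a b : Fin N) :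
    f (Fin.snoc u a) < f (Fin.snoc w a) ↔ f (Fin.snoc u b) < f (Fin.snoc w b) := by
  have habove : ∀ a, ∀ j, (Fin.last d).castSucc < j →
      (Fin.snoc u a : Fin (d + 2) → Fin N) j = (Fin.snoc w a : Fin (d + 2) → Fin N) j :=
    fun a => snoc_eq_snoc_above_castSucc_iff.2 ⟨fun j hj => absurd hj (Fin.le_last j).not_gt, rfl⟩
  exact hf.2 (Fin.last d).castSucc _ _ _ _ (inBox_univ _) (inBox_univ _) (inBox_univ _)
    (inBox_univ _) (habove a) (habove b) (snoc_eq_snoc_upto_castSucc_iff.2 fun _ _ => rfl)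
    (snoc_eq_snoc_upto_castSucc_iff.2 fun _ _ => rfl)

lemma sum_card_filter_snoc_mem (S : Finset (Fin (d + 1) → Fin N)) :
    ∑ u : Fin d → Fin N, #{a | (Fin.snoc u a : Fin (d + 1) → Fin N) ∈ S} = #S := by
  rw [card_eq_sum_card_fiberwise (f := Fin.init) (t := univ) fun _ _ => mem_univ _]
  refine sum_congr rfl fun u _ => card_nbij' (fun a => (Fin.snoc u a : Fin (d + 1) → Fin N))
    (· (Fin.last d)) (fun a ha => by simpa using ha) (fun x hx => ?_) (fun a _ => by simp)
    fun x hx => ?_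
  · obtain ⟨hxS, rfl⟩ : x ∈ S ∧ Fin.init x = u := by simpa using hx
    simpa [Fin.snoc_init_self] using hxS
  · obtain ⟨-, rfl⟩ : x ∈ S ∧ Fin.init x = u := by simpa using hx
    exact Fin.snoc_init_self x

theorem exists_monotone_box_of_dim_one {k : ℕ} {f : (Fin 1 → Fin N) → ℝ}
    (hf : ConsistentArrayOn f fun _ => univ) {S : Finset (Fin 1 → Fin N)} (hS : k ≤ #S) :
    ∃ A : Fin 1 → Finset (Fin N),
      (∀ i, #(A i) = k) ∧ (∀ x, InBox A x → x ∈ S) ∧ MonotoneArrayOn f A := by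
  set e := Equiv.funUnique (Fin 1) (Fin N)
  obtain ⟨B, hBS, hBk⟩ := exists_subset_card_eq (s := S.map e.toEmbedding) (by simpa using hS)
  refine ⟨fun _ => B, fun _ => hBk, fun x hx => ?_, ?_⟩
  · obtain ⟨y, hyS, hyx⟩ := mem_map.1 (hBS (hx 0))
    rwa [← e.injective hyx]
  · have hline := hf.1 0 rfl
    refine MonotoneArrayOn.mono (fun i => ?_) fun _ => subset_univ _
    rwa [Fin.fin_one_eq_zero i]

end Arrays

theorem ConsistentArrayOn.exists_monotone_box {d k N : ℕ} {f : (Fin (d + 1) → Fin N) → ℝ}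
    (hcons : ConsistentArrayOn f fun _ => univ) (hf : Function.Injective f) (hk : 0 < k)
    {ε : ℝ} (hε0 : 0 < ε) (hε : ε < 1 / 2) (hN : ((k : ℝ) / ε) ^ (2 * 15 ^ d * k ^ d) ≤ N)
    {S : Finset (Fin (d + 1) → Fin N)} (hS : ε * (N : ℝ) ^ (d + 1) ≤ #S) :
    ∃ A : Fin (d + 1) → Finset (Fin N),
      (∀ i, #(A i) = k) ∧ (∀ x, InBox A x → x ∈ S) ∧ MonotoneArrayOn f A := by
  have hk1 : (1 : ℝ) ≤ k := by exact_mod_cast hk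
  induction d generalizing ε with
  | zero =>
    refine exists_monotone_box_of_dim_one hcons ?_
    have : (k : ℝ) ≤ #S :=
      calc (k : ℝ) ≤ ε * (k / ε) ^ 2 := by
            rw [div_pow, mul_div_assoc', le_div_iff₀ (by positivity)]
            nlinarith [mul_nonneg (mul_nonneg (Nat.cast_nonneg k) hε0.le)
              (by linarith : (0 : ℝ) ≤ k - ε)]
        _ ≤ ε * N := by gcongr; simpa using hN
        _ ≤ #S := by simpa using hS
    exact_mod_cast this
  | succ d ih =>
    have hN' : ((k : ℝ) / columnDensity ε k) ^ (2 * 15 ^ d * k ^ d) ≤ N :=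
      calc ((k : ℝ) / columnDensity ε k) ^ (2 * 15 ^ d * k ^ d)
          ≤ ((k / ε) ^ (15 * k)) ^ (2 * 15 ^ d * k ^ d) :=
            pow_le_pow_left₀ (div_nonneg (Nat.cast_nonneg k) (columnDensity_pos hk hε0).le)
              (div_columnDensity_le hk hε0 hε) _
        _ = (k / ε) ^ (2 * 15 ^ (d + 1) * k ^ (d + 1)) := by rw [← pow_mul]; ring_nf
        _ ≤ N := hN
    have hexp : 3 ≤ 2 * 15 ^ (d + 1) * k ^ (d + 1) := by
      have h15 : 15 ≤ 15 ^ (d + 1) := Nat.le_self_pow (by omega) 15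
      have hkd : 1 ≤ k ^ (d + 1) := Nat.one_le_pow _ _ hk
      nlinarith
    have hrows : ε * Fintype.card (Fin (d + 1) → Fin N) * Fintype.card (Fin N) ≤
        ∑ u, (#{a | (Fin.snoc u a : Fin (d + 2) → Fin N) ∈ S} : ℝ) := by
      rw [← Nat.cast_sum, sum_card_filter_snoc_mem]
      simpa [Fintype.card_fun, pow_succ, mul_assoc] using hS
    obtain ⟨M, hMk, T, hT, hTS, hdir⟩ := exists_dense_columns_with_common_monotone_subset
      (v := fun u a => f (Fin.snoc u a))
      (fun u => (hf.comp (Fin.snoc_right_injective (α := fun _ => Fin N) u)).injOn) hk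
      (by linarith) (by simpa using four_mul_sq_le_mul_of_div_pow_le hk1 hε0 hε hexp hN) hrows
    obtain ⟨a₀, -⟩ := card_pos.1 (hMk ▸ hk)
    obtain ⟨A, hAk, hAT, hAmono⟩ := ih (hcons.slice a₀)
      (hf.comp (Fin.snoc_left_injective (α := fun _ => Fin N) a₀)) (columnDensity_pos hk hε0)
      (columnDensity_lt_half hk hε0 hε) hN' (S := T) (by simpa using hT)
    refine ⟨Fin.snoc A M, Fin.lastCases (by simpa using hMk) fun i => by simpa using hAk i,
      fun x hx => ?_, hAmono.snoc a₀ (fun u w a => hcons.snoc_lt_snoc_iff u w a a₀)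
        (hdir.imp (fun h u hu => h u (hAT u hu)) fun h u hu => h u (hAT u hu))⟩
    induction x using Fin.snocCases with | _ u a => ?_
    rw [inBox_snoc_iff] at hx
    simpa using hTS u (hAT u hx.1) hx.2

/-- Lemma 3.1: with `g = 2·15^(d-1)`, if `N ≥ ε^(-g·k^(d-1)) · k^(g·k^(d-1))`
and `f : [N]^d → ℝ` is an injective `d`-consistent array, then every
`S ⊆ [N]^d` of size at least `ε·N^d` contains a monotone subarray of size
`[k]^d`. -/
theorem consistent_array_monotone_box (d : ℕ) (hd : 0 < d) (k : ℕ)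
    (hk : 0 < k) (ε : ℝ) (hε0 : 0 < ε) (hε : ε < 1 / 2) (N : ℕ)
    (hN : ε ^ (-((2 * 15 ^ (d - 1) * k ^ (d - 1) : ℕ) : ℤ)) *
        (k : ℝ) ^ (2 * 15 ^ (d - 1) * k ^ (d - 1)) ≤ (N : ℝ))
    (f : (Fin d → Fin N) → ℝ) (hf : Function.Injective f)
    (hcons : ConsistentArrayOn f (fun _ => Finset.univ))
    (S : Finset (Fin d → Fin N)) (hS : ε * (N : ℝ) ^ d ≤ (S.card : ℝ)) :
    ∃ A : Fin d → Finset (Fin N),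
      (∀ i : Fin d, (A i).card = k) ∧
      (∀ x : Fin d → Fin N, InBox A x → x ∈ S) ∧
      MonotoneArrayOn f A := by
  obtain ⟨d, rfl⟩ := Nat.exists_eq_add_of_le' hd
  refine hcons.exists_monotone_box hf hk hε0 hε ?_ hS
  rwa [add_tsub_cancel_right, zpow_neg, zpow_natCast, inv_mul_eq_div, ← div_pow] at hN
end
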